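/- For configurations C, C' ∈ {•,∘}^n with W(C' → C) ≠ 0, the set F(C' → C) = (R∘f)^{-1}{C'} ∩ (R∘f∘π)^{-1}{C} has cardinality equal to |R^{-1}{C'}|: for each tree T' ∈ R^{-1}{C'} there is exactly one marking of T' such that applying π yields a tree reducing to C. -/

import Mathlib

/-- Plane binary trees: every internal vertex has exactly two ordered children. -/
inductive PTree where
  | leaf : PTree
  | node : PTree → PTree → PTree
  deriving DecidableEq

namespace PTree

/-- number of leaves (endpoints) -/
def numLeaves : PTree → ℕ
  | leaf => 1
  | node l r => numLeaves l + numLeaves r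

/-- directions of the leaves of a subtree which is itself a `b`-child
(`true` = left child, `false` = right child), in left-to-right order. -/
def dirsAux : PTree → Bool → List Bool
  | leaf, b => [b]
  | node l r, _ => dirsAux l true ++ dirsAux r false

/-- the left/right-child directions of all leaves of a tree, left to right
(`true` = left child, `false` = right child). -/
def dirs : PTree → List Bool
  | leaf => []
  | node l r => dirsAux l true ++ dirsAux r false

/-- The reduction map `R`: the directions of the 2nd through (n+1)-th leaves;
`true` = • (occupied site, left child), `false` = ∘ (empty site, right child). -/
def red (T : PTree) : List Bool := ((dirs T).drop 1).dropLast

/-- number of internal vertices on the path from the leftmost leaf to the root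
(root included). -/
def lCount : PTree → ℕ
  | leaf => 0
  | node l _ => lCount l + 1

/-- number of internal vertices on the path from the rightmost leaf to the root
(root included). -/
def rCount : PTree → ℕ
  | leaf => 0
  | node _ r => rCount r + 1

/-- number of last branching vertices (internal vertices whose two children are leaves). -/
def lbCount : PTree → ℕ
  | leaf => 0
  | node leaf leaf => 1
  | node l r => lbCount l + lbCount r

end PTree

/-- Marked plane binary trees: a plane binary tree with exactly one of its
last branching vertices marked (the constructor `mark` is the marked vertex,
a vertex with two leaf children). -/
inductive MTree where
  | mark : MTree
  | nodeL : MTree → PTree → MTree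
  | nodeR : PTree → MTree → MTree
  deriving DecidableEq

namespace MTree

/-- forgetful map to plane binary trees -/
def forget : MTree → PTree
  | mark => .node .leaf .leaf
  | nodeL l r => .node (forget l) r
  | nodeR l r => .node l (forget r)

/-- collapse the marked vertex (with its two leaf children) to a single leaf. -/
def collapseT : MTree → PTree
  | mark => .leaf
  | nodeL l r => .node (collapseT l) r
  | nodeR l r => .node l (collapseT r)

/-- index (left to right, starting from 0) of the leaf of `collapseT` obtained
by collapsing the marked vertex. -/
def markIdx : MTree → ℕ
  | mark => 0
  | nodeL l _ => markIdx l
  | nodeR l r => l.numLeaves + markIdx r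

end MTree

/-- replace the `i`-th leaf of a tree by a marked last branching vertex. -/
def expand : PTree → ℕ → MTree
  | .leaf, _ => .mark
  | .node l r, i =>
      if i < l.numLeaves then .nodeL (expand l i) r
      else .nodeR l (expand r (i - l.numLeaves))

/-- index of the next right-child (`false`) leaf strictly after position `i`;
if there is none, the index of the rightmost left-child (`true`) leaf. -/
def nextFalseIdx (w : List Bool) (i : ℕ) : ℕ :=
  if (w.drop (i+1)).findIdx (fun b => !b) < (w.drop (i+1)).length
  then i + 1 + (w.drop (i+1)).findIdx (fun b => !b)
  else w.length - 1 - (w.reverse.findIdx (fun b => b))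

/-- index of the closest left-child (`true`) leaf strictly before position `i`;
if there is none, the index of the leftmost right-child (`false`) leaf. -/
def prevTrueIdx (w : List Bool) (i : ℕ) : ℕ :=
  if ((w.take i).reverse).findIdx (fun b => b) < i
  then i - 1 - ((w.take i).reverse).findIdx (fun b => b)
  else w.findIdx (fun b => !b)

/-- position of the leaf where the removed segment is re-glued by `π`. -/
def target (w : List Bool) (i : ℕ) : ℕ :=
  if w.getD i true then prevTrueIdx w i else nextFalseIdx w i

/-- The map `π` on marked trees: remove the segment joining the marked vertex to
its left (resp. right) leaf when the marked vertex is a right (resp. left) child,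
and glue it to the next right- (resp. left-) child leaf to the right (resp. left),
with the boundary rule when no such leaf exists; the new vertex is marked. -/
def piM (M : MTree) : MTree :=
  expand M.collapseT (target M.collapseT.dirs M.markIdx)

open Classical in
/-- Transition rates of the `n`-site open-boundary TASEP, on configurations
encoded as lists of booleans (`true` = •, `false` = ∘). -/
noncomputable def rate (α β : ℝ) (C C' : List Bool) : ℝ :=
  if ∃ A, C = false :: A ∧ C' = true :: A then α
  else if ∃ A, C = A ++ [true] ∧ C' = A ++ [false] then β
  else if ∃ A A', C = A ++ true :: false :: A' ∧ C' = A ++ false :: true :: A' then 1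
  else 0

/-- number of active bonds of a configuration: injection at site 1 if empty,
extraction at site n if occupied, and hops across •∘ pairs. -/
def activeCount (C : List Bool) : ℕ :=
  (if C.head? = some false then 1 else 0) +
  ((C.zip C.tail).count (true, false)) +
  (if C.getLast? = some true then 1 else 0)

/-- the weight `μ(T) = α^{-l(T)} β^{-r(T)}` of a plane binary tree. -/
noncomputable def mu (α β : ℝ) (T : PTree) : ℝ :=
  α ^ (-(T.lCount : ℤ)) * β ^ (-(T.rCount : ℤ))

/-- number of internal vertices on the path from the leftmost leaf to the root,
excluding the marked vertex. -/
def lCountM : MTree → ℕ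
  | .mark => 0
  | .nodeL l _ => lCountM l + 1
  | .nodeR l _ => l.lCount + 1

/-- number of internal vertices on the path from the rightmost leaf to the root,
excluding the marked vertex. -/
def rCountM : MTree → ℕ
  | .mark => 0
  | .nodeR _ r => rCountM r + 1
  | .nodeL _ r => r.rCount + 1

/-- the weight `μ̂` of a marked tree, excluding the marked vertex from the counts. -/
noncomputable def muHat (α β : ℝ) (M : MTree) : ℝ :=
  α ^ (-(lCountM M : ℤ)) * β ^ (-(rCountM M : ℤ))

/-!
The leaf directions of a tree with reduction `C` form the padded word `• C ∘`, and the two leaves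
of the marked vertex of `M` sit at consecutive positions `i, i + 1` of the word of `f(M)`, which
carry `•∘`. Collapsing the marked vertex and re-gluing it where `π` does changes this word exactly
like a TASEP particle hop across the bond `(i, i + 1)`, the outer letters acting as reservoirs.
Hops across distinct bonds give distinct configurations, so `f(M)` and `R(f(π M))` determine `M`.
Conversely, `W(C' → C) ≠ 0` says that `C` arises from `C'` by a hop across some bond `k`; in the
word of any `T'` with `R(T') = C'` the positions `k, k + 1` carry `•∘`, so they are the leaves of a
last branching vertex, and marking it gives the preimage of `T'` under `f`.
-/

open List

def splitLeaf (w : List Bool) (i : ℕ) : List Bool := w.take i ++ true :: false :: w.drop (i + 1)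

/-- In the padded word `true :: (C ++ [false])` of a configuration `C` the outer letters are
reservoirs: `hop u i` moves a particle across the bond `(i, i + 1)` and `dropEnds` forgets the
reservoirs again. -/
def hop (u : List Bool) (i : ℕ) : List Bool := (u.set i false).set (i + 1) true

def dropEnds (u : List Bool) : List Bool := (u.drop 1).dropLast

lemma splitLeaf_append_cons (X Z : List Bool) (c : Bool) :
    splitLeaf (X ++ c :: Z) X.length = X ++ true :: false :: Z := by
  simp [splitLeaf]

lemma hop_append_cons_cons (X Z : List Bool) (a b : Bool) :
    hop (X ++ a :: b :: Z) X.length = X ++ false :: true :: Z := by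
  simp [hop, set_append_right]

lemma splitLeaf_append_of_lt {L R : List Bool} {i : ℕ} (h : i < L.length) :
    splitLeaf (L ++ R) i = splitLeaf L i ++ R := by
  simp [splitLeaf, take_append_of_le_length h.le, drop_append_of_le_length h]

lemma splitLeaf_append_of_le {L R : List Bool} {i : ℕ} (h : L.length ≤ i) :
    splitLeaf (L ++ R) i = L ++ splitLeaf R (i - L.length) := by
  simp [splitLeaf, take_append, drop_append, take_of_length_le h,
    drop_of_length_le (show L.length ≤ i + 1 by omega),
    show i + 1 - L.length = i - L.length + 1 by omega]

lemma getElem?_splitLeaf_self {w : List Bool} {i : ℕ} (h : i ≤ w.length) :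
    (splitLeaf w i)[i]? = some true := by
  simp [splitLeaf, h]

lemma getElem?_splitLeaf_succ {w : List Bool} {i : ℕ} (h : i ≤ w.length) :
    (splitLeaf w i)[i + 1]? = some false := by
  simp [splitLeaf, h]

lemma replicate_append_cons_self {α : Type*} (m : ℕ) (a : α) (Z : List α) :
    replicate m a ++ a :: Z = a :: (replicate m a ++ Z) := by
  rw [← singleton_append, ← append_assoc, ← replicate_succ', replicate_succ, cons_append]

lemma eq_take_append_getElem_cons_drop {α : Type*} {l : List α} {i : ℕ} (hi : i < l.length) :
    l = l.take i ++ l[i] :: l.drop (i + 1) := by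
  rw [← drop_eq_getElem_cons, take_append_drop]

lemma eq_replicate_append_cons_of_mem {b : Bool} {l : List Bool} (h : b ∈ l) :
    ∃ m Y, l = replicate m (!b) ++ b :: Y := by
  obtain ⟨S, Y, hS, rfl, -⟩ := exists_erase_eq h
  refine ⟨S.length, Y, ?_⟩
  have hS' : S = replicate S.length (!b) :=
    eq_replicate_iff.2 ⟨rfl, fun x hx => by cases x <;> cases b <;> simp_all⟩
  rw [← hS']

lemma eq_append_cons_replicate_of_mem {b : Bool} {l : List Bool} (h : b ∈ l) :
    ∃ X m, l = X ++ b :: replicate m (!b) := by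
  obtain ⟨m, Y, hY⟩ := eq_replicate_append_cons_of_mem (mem_reverse.2 h)
  exact ⟨Y.reverse, m, by simpa using congrArg reverse hY⟩

lemma findIdx_replicate_append_cons {p : Bool → Bool} {a b : Bool} (ha : p a = false)
    (hb : p b = true) (m : ℕ) (Y : List Bool) : (replicate m a ++ b :: Y).findIdx p = m := by
  induction m with
  | zero => simp [findIdx_cons, hb]
  | succ m ih => simp [replicate_succ, findIdx_cons, ha, ih]

lemma target_of_next_false (X Y : List Bool) (m : ℕ) :
    target (X ++ false :: (replicate m true ++ false :: Y)) X.length = X.length + 1 + m := by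
  simp [target, nextFalseIdx, findIdx_replicate_append_cons]

lemma target_of_prev_true (X Y : List Bool) (m : ℕ) :
    target (X ++ true :: (replicate m false ++ true :: Y)) (X.length + m + 1) = X.length := by
  have hP : X ++ true :: (replicate m false ++ true :: Y)
      = (X ++ true :: replicate m false) ++ true :: Y := by simp
  have hrev : (X ++ true :: replicate m false).reverse
      = replicate m false ++ true :: X.reverse := by
    simp
  have hi : X.length + m + 1 = (X ++ true :: replicate m false).length := by simp; omega
  rw [hP, hi, target, getD_append_right _ _ _ _ le_rfl, Nat.sub_self]
  simp only [getD_cons_zero, if_true, prevTrueIdx, take_left, hrev,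
    findIdx_replicate_append_cons (p := fun b => b) rfl rfl]
  simp; omega

lemma target_zero (Y : List Bool) (m : ℕ) :
    target (true :: (replicate m true ++ false :: Y)) 0 = m + 1 := by
  rw [← cons_append, ← replicate_succ]
  simp [target, prevTrueIdx, findIdx_replicate_append_cons]

lemma target_of_last (X : List Bool) (m : ℕ) :
    target (X ++ true :: (replicate m false ++ [false])) (X.length + m + 1) = X.length := by
  have hP : X ++ true :: (replicate m false ++ [false])
      = (X ++ true :: replicate m false) ++ [false] := by
    simp
  have hrev : ((X ++ true :: replicate m false) ++ [false]).reverse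
      = replicate (m + 1) false ++ true :: X.reverse := by
    simp [replicate_succ]
  have hi : X.length + m + 1 = (X ++ true :: replicate m false).length := by simp; omega
  rw [hP, hi, target, getD_append_right _ _ _ _ le_rfl, Nat.sub_self]
  simp only [getD_cons_zero, Bool.false_eq_true, if_false, nextFalseIdx, hrev,
    findIdx_replicate_append_cons (p := fun b => b) rfl rfl]
  simp
  omega

section TargetSpec

variable {w V X Y : List Bool} {m i : ℕ}

lemma target_spec_of_next_false (hw : w = X ++ false :: (replicate m true ++ false :: Y)) :
    target w X.length < w.length ∧
      splitLeaf w (target w X.length) = hop (splitLeaf w X.length) X.length := by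
  subst hw
  have hj : X.length + 1 + m = (X ++ false :: replicate m true).length := by simp; omega
  refine ⟨by simp [target_of_next_false]; omega, ?_⟩
  rw [target_of_next_false, splitLeaf_append_cons, hop_append_cons_cons,
    show X ++ false :: (replicate m true ++ false :: Y)
      = (X ++ false :: replicate m true) ++ false :: Y by simp, hj, splitLeaf_append_cons]
  simp [replicate_append_cons_self]

lemma target_spec_of_prev_true (hw : w = X ++ true :: (replicate m false ++ true :: Y)) :
    target w (X.length + m + 1) < w.length ∧
      splitLeaf w (target w (X.length + m + 1))
        = hop (splitLeaf w (X.length + m + 1)) (X.length + m + 1) := by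
  subst hw
  have hi : X.length + m + 1 = (X ++ true :: replicate m false).length := by simp; omega
  refine ⟨by simp [target_of_prev_true], ?_⟩
  rw [target_of_prev_true, splitLeaf_append_cons,
    show X ++ true :: (replicate m false ++ true :: Y)
      = (X ++ true :: replicate m false) ++ true :: Y by simp,
    hi, splitLeaf_append_cons, hop_append_cons_cons]
  simp [replicate_append_cons_self]

lemma target_spec_zero (hw : w = true :: (replicate m true ++ false :: Y)) :
    target w 0 < w.length ∧ (splitLeaf w (target w 0)).tail = (hop (splitLeaf w 0) 0).tail := by
  subst hw
  have hj : m + 1 = (true :: replicate m true).length := by simp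
  refine ⟨by simp [target_zero], ?_⟩
  rw [target_zero, hj, ← cons_append, splitLeaf_append_cons]
  simp [splitLeaf, hop, replicate_append_cons_self]

lemma target_spec_last (hw : w = X ++ true :: (replicate m false ++ [false])) :
    target w (X.length + m + 1) < w.length ∧
      (splitLeaf w (target w (X.length + m + 1))).dropLast
        = (hop (splitLeaf w (X.length + m + 1)) (X.length + m + 1)).dropLast := by
  subst hw
  have hi : X.length + m + 1 = (X ++ true :: replicate m false).length := by simp; omega
  refine ⟨by simp [target_of_last], ?_⟩
  rw [target_of_last, splitLeaf_append_cons,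
    show X ++ true :: (replicate m false ++ [false]) = (X ++ true :: replicate m false) ++ [false]
      by simp, hi, splitLeaf_append_cons, hop_append_cons_cons, ← replicate_append_cons_self,
    show X ++ true :: (replicate m false ++ [false, false])
      = (X ++ true :: replicate m false ++ [false]) ++ [false] by simp,
    show (X ++ true :: replicate m false) ++ [false, true]
      = (X ++ true :: replicate m false ++ [false]) ++ [true] by simp,
    dropLast_concat, dropLast_concat]

lemma target_spec_of_getElem_eq_false (hw : w = true :: (V ++ [false])) (hi : i < w.length)
    (hwi : w[i] = false) :
    target w i < w.length ∧
      dropEnds (splitLeaf w (target w i)) = dropEnds (hop (splitLeaf w i) i) := by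
  have hdecomp := eq_take_append_getElem_cons_drop hi
  have hlen : (w.take i).length = i := by simp; omega
  by_cases hf : false ∈ w.drop (i + 1)
  · obtain ⟨m, Y, hY⟩ := eq_replicate_append_cons_of_mem hf
    obtain ⟨hlt, heq⟩ := target_spec_of_next_false (hwi ▸ hY ▸ hdecomp)
    rw [hlen] at hlt heq
    exact ⟨hlt, congrArg dropEnds heq⟩
  have hiV : i = V.length + 1 := by
    subst hw
    by_contra hne
    simp at hi
    exact hf (by simp [drop_append_of_le_length (show i ≤ V.length by omega)])
  have ht : true ∈ w.take i := by
    rw [hw, hiV, take_succ_cons, take_left]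
    exact mem_cons_self
  obtain ⟨X, m, hX⟩ := eq_append_cons_replicate_of_mem ht
  have hw' : w = X ++ true :: (replicate m false ++ [false]) := by
    rw [hdecomp, hX, hwi, drop_eq_nil_of_le (by rw [hw]; simp; omega)]
    simp
  have hiX : i = X.length + m + 1 := by
    have := congrArg length hX
    simp [hlen] at this
    omega
  obtain ⟨hlt, heq⟩ := target_spec_last hw'
  rw [← hiX] at hlt heq
  exact ⟨hlt, by simp only [dropEnds, dropLast_drop_eq_drop_dropLast, heq]⟩

lemma target_spec_of_getElem_eq_true (hw : w = true :: (V ++ [false])) (hi : i < w.length)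
    (hwi : w[i] = true) :
    target w i < w.length ∧
      dropEnds (splitLeaf w (target w i)) = dropEnds (hop (splitLeaf w i) i) := by
  by_cases ht : true ∈ w.take i
  · obtain ⟨X, m, hX⟩ := eq_append_cons_replicate_of_mem ht
    have hw' : w = X ++ true :: (replicate m false ++ true :: w.drop (i + 1)) := by
      conv_lhs => rw [eq_take_append_getElem_cons_drop hi, hX, hwi]
      simp
    have hiX : i = X.length + m + 1 := by
      have := congrArg length hX
      simp at this
      omega
    obtain ⟨hlt, heq⟩ := target_spec_of_prev_true hw'
    rw [← hiX] at hlt heq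
    exact ⟨hlt, congrArg dropEnds heq⟩
  obtain rfl : i = 0 := by
    by_contra hne
    exact ht (by rw [hw, take_cons (by omega)]; exact mem_cons_self)
  obtain ⟨m, Y, hY⟩ := eq_replicate_append_cons_of_mem (show false ∈ V ++ [false] by simp)
  obtain ⟨hlt, heq⟩ := target_spec_zero (hY ▸ hw)
  exact ⟨hlt, by simp only [dropEnds, drop_one, heq]⟩

lemma target_spec (hw : w = true :: (V ++ [false])) (hi : i < w.length) :
    target w i < w.length ∧
      dropEnds (splitLeaf w (target w i)) = dropEnds (hop (splitLeaf w i) i) := by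
  cases hwi : w[i]
  · exact target_spec_of_getElem_eq_false hw hi hwi
  · exact target_spec_of_getElem_eq_true hw hi hwi

end TargetSpec

lemma eq_of_dropEnds_hop_eq {u : List Bool} {i k : ℕ} (hi : u[i]? = some true)
    (hi1 : u[i + 1]? = some false) (hk : u[k]? = some true) (hk1 : u[k + 1]? = some false)
    (h : dropEnds (hop u i) = dropEnds (hop u k)) : i = k := by
  wlog hik : i < k generalizing i k
  · rcases Nat.lt_or_ge k i with hki | hki
    · exact (this hk hk1 hi hi1 h.symm hki).symm
    · omega
  have hik1 : i + 1 ≠ k := by rintro rfl; simp_all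
  have hk1len : k + 1 < u.length := by
    by_contra hh; rw [getElem?_eq_none (by omega)] at hk1; simp at hk1
  have hlen : i < u.length - 1 - 1 := by omega
  -- site `i + 1` is occupied after the hop at `i` but still empty after the hop at `k`
  have := congrArg (·[i]?) h
  simp [dropEnds, hop, hlen, hik.ne', hik1.symm] at this
  simp [getElem?_eq_getElem (show i + 1 < u.length by omega), this] at hi1

lemma exists_hop_eq_of_rate_ne_zero {α β : ℝ} {C' C : List Bool} (hW : rate α β C' C ≠ 0) :
    ∃ k, (true :: (C' ++ [false]))[k]? = some true ∧
      (true :: (C' ++ [false]))[k + 1]? = some false ∧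
      dropEnds (hop (true :: (C' ++ [false])) k) = C := by
  unfold rate at hW
  split_ifs at hW with hα hβ hbulk
  · obtain ⟨A, rfl, rfl⟩ := hα
    exact ⟨0, by simp [dropEnds, hop, dropLast_cons_of_ne_nil]⟩
  · obtain ⟨A, rfl, rfl⟩ := hβ
    refine ⟨A.length + 1, ?_⟩
    simp [dropEnds, hop]
  · obtain ⟨A, A', rfl, rfl⟩ := hbulk
    refine ⟨A.length + 1, ?_⟩
    simp [dropEnds, hop, dropLast_cons_of_ne_nil]
  · exact absurd rfl hW

namespace PTree

lemma length_dirsAux (T : PTree) (b : Bool) : (dirsAux T b).length = T.numLeaves := by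
  induction T generalizing b with
  | leaf => rfl
  | node l r ihl ihr => simp [dirsAux, numLeaves, ihl, ihr]

lemma exists_dirsAux_true_eq_cons (T : PTree) : ∃ V, dirsAux T true = true :: V := by
  induction T with
  | leaf => exact ⟨[], rfl⟩
  | node l r ihl _ =>
    obtain ⟨V, hV⟩ := ihl
    exact ⟨V ++ dirsAux r false, by simp [dirsAux, hV]⟩

lemma exists_dirsAux_false_eq_concat (T : PTree) : ∃ V, dirsAux T false = V ++ [false] := by
  induction T with
  | leaf => exact ⟨[], rfl⟩
  | node l r _ ihr =>
    obtain ⟨V, hV⟩ := ihr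
    exact ⟨dirsAux l true ++ V, by simp [dirsAux, hV]⟩

lemma exists_dirsAux_node_eq (l r : PTree) (b : Bool) :
    ∃ V, dirsAux (node l r) b = true :: (V ++ [false]) := by
  obtain ⟨V₁, h₁⟩ := exists_dirsAux_true_eq_cons l
  obtain ⟨V₂, h₂⟩ := exists_dirsAux_false_eq_concat r
  exact ⟨V₁ ++ V₂, by simp [dirsAux, h₁, h₂]⟩

lemma dirs_eq_dirsAux {T : PTree} (hT : T ≠ leaf) (b : Bool) : T.dirs = T.dirsAux b := by
  cases T with
  | leaf => exact absurd rfl hT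
  | node l r => rfl

lemma length_dirs_of_ne_leaf {T : PTree} (hT : T ≠ leaf) : T.dirs.length = T.numLeaves := by
  rw [dirs_eq_dirsAux hT true, length_dirsAux]

lemma dirs_eq_cons_red {T : PTree} (hT : 2 ≤ T.numLeaves) :
    T.dirs = true :: (T.red ++ [false]) := by
  cases T with
  | leaf => simp [numLeaves] at hT
  | node l r =>
    obtain ⟨V, hV⟩ := exists_dirsAux_node_eq l r true
    have hdirs : (node l r).dirs = true :: (V ++ [false]) := hV
    simp [red, hdirs]

end PTree

namespace MTree

lemma forget_ne_leaf (M : MTree) : M.forget ≠ .leaf := by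
  cases M <;> simp [forget]

lemma numLeaves_forget (M : MTree) : M.forget.numLeaves = M.collapseT.numLeaves + 1 := by
  induction M with
  | mark => rfl
  | nodeL l r ih => simp [forget, collapseT, PTree.numLeaves, ih]; omega
  | nodeR l r ih => simp [forget, collapseT, PTree.numLeaves, ih]; omega

lemma markIdx_lt (M : MTree) : M.markIdx < M.collapseT.numLeaves := by
  induction M with
  | mark => simp [markIdx, collapseT, PTree.numLeaves]
  | nodeL l r ih => simp [markIdx, collapseT, PTree.numLeaves]; omega
  | nodeR l r ih => simp [markIdx, collapseT, PTree.numLeaves]; omega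

lemma expand_collapseT_markIdx (M : MTree) : expand M.collapseT M.markIdx = M := by
  induction M with
  | mark => rfl
  | nodeL l r ih => simp [collapseT, markIdx, expand, markIdx_lt, ih]
  | nodeR l r ih => simp [collapseT, markIdx, expand, ih]

lemma eq_of_forget_eq_of_markIdx_eq {M₁ M₂ : MTree} (h : M₁.forget = M₂.forget)
    (hidx : M₁.markIdx = M₂.markIdx) : M₁ = M₂ := by
  have hlt (M : MTree) : M.markIdx < M.forget.numLeaves - 1 := by
    have := markIdx_lt M; have := numLeaves_forget M; omega
  induction M₁ generalizing M₂ with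
  | mark =>
    cases M₂ <;> simp_all [forget, eq_comm (a := PTree.leaf), forget_ne_leaf]
  | nodeL l r ih =>
    cases M₂ with
    | mark => simp_all [forget, forget_ne_leaf]
    | nodeL l₂ r₂ =>
      simp only [forget, markIdx, PTree.node.injEq] at h hidx
      rw [ih h.1 hidx, h.2]
    | nodeR l₂ r₂ =>
      simp only [forget, markIdx, PTree.node.injEq] at h hidx
      have := hlt l
      rw [h.1] at this
      omega
  | nodeR l r ih =>
    cases M₂ with
    | mark => simp_all [forget, forget_ne_leaf]
    | nodeL l₂ r₂ =>
      simp only [forget, markIdx, PTree.node.injEq] at h hidx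
      have := hlt l₂
      rw [← h.1] at this
      omega
    | nodeR l₂ r₂ =>
      simp only [forget, markIdx, PTree.node.injEq] at h hidx
      rw [h.1] at hidx ⊢
      rw [ih h.2 (by omega)]

end MTree

lemma dirsAux_forget_expand (T : PTree) (b : Bool) {i : ℕ} (h : i < T.numLeaves) :
    (expand T i).forget.dirsAux b = splitLeaf (T.dirsAux b) i := by
  induction T generalizing i b with
  | leaf =>
    obtain rfl : i = 0 := by simpa [PTree.numLeaves] using h
    rfl
  | node l r ihl ihr =>
    simp only [PTree.numLeaves] at h
    by_cases hi : i < l.numLeaves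
    · simp only [expand, hi, if_true, MTree.forget, PTree.dirsAux]
      rw [splitLeaf_append_of_lt (by rwa [PTree.length_dirsAux]), ihl true hi]
    · simp only [expand, hi, if_false, MTree.forget, PTree.dirsAux]
      rw [splitLeaf_append_of_le (by rw [PTree.length_dirsAux]; omega), ihr false (by omega),
        PTree.length_dirsAux]

lemma dirs_forget_expand (T : PTree) {i : ℕ} (h : i < T.numLeaves) :
    (expand T i).forget.dirs = splitLeaf T.dirs i := by
  cases T with
  | leaf =>
    obtain rfl : i = 0 := by simpa [PTree.numLeaves] using h
    rfl
  | node l r =>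
    rw [PTree.dirs_eq_dirsAux (MTree.forget_ne_leaf _) true, dirsAux_forget_expand _ _ h]
    rfl

namespace MTree

lemma dirs_forget (M : MTree) : M.forget.dirs = splitLeaf M.collapseT.dirs M.markIdx := by
  conv_lhs => rw [← expand_collapseT_markIdx M]
  exact dirs_forget_expand _ (markIdx_lt M)

lemma markIdx_le_length_dirs (M : MTree) : M.markIdx ≤ M.collapseT.dirs.length := by
  have := markIdx_lt M
  cases hc : M.collapseT with
  | leaf => simp [hc, PTree.numLeaves] at this; omega
  | node l r => rw [PTree.length_dirs_of_ne_leaf (by simp), ← hc]; omega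

lemma getElem?_dirs_forget_markIdx (M : MTree) : M.forget.dirs[M.markIdx]? = some true := by
  rw [dirs_forget, getElem?_splitLeaf_self (markIdx_le_length_dirs M)]

lemma getElem?_dirs_forget_markIdx_succ (M : MTree) :
    M.forget.dirs[M.markIdx + 1]? = some false := by
  rw [dirs_forget, getElem?_splitLeaf_succ (markIdx_le_length_dirs M)]

lemma red_forget_piM (M : MTree) : (piM M).forget.red = dropEnds (hop M.forget.dirs M.markIdx) := by
  rcases hc : M.collapseT with _ | ⟨l, r⟩
  · obtain rfl : M = mark := by rw [← expand_collapseT_markIdx M, hc]; rfl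
    rfl
  · obtain ⟨V, hV⟩ := PTree.exists_dirsAux_node_eq l r true
    have hw : M.collapseT.dirs = true :: (V ++ [false]) := by rw [hc]; exact hV
    have hlen : M.collapseT.dirs.length = M.collapseT.numLeaves := by
      rw [hc, PTree.length_dirs_of_ne_leaf (by simp)]
    obtain ⟨hlt, heq⟩ := target_spec hw (hlen ▸ markIdx_lt M)
    rw [piM, PTree.red, dirs_forget_expand _ (hlen ▸ hlt), dirs_forget]
    exact heq

lemma eq_of_forget_eq_of_red_piM_eq {M₁ M₂ : MTree} (h : M₁.forget = M₂.forget)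
    (hπ : (piM M₁).forget.red = (piM M₂).forget.red) : M₁ = M₂ := by
  refine eq_of_forget_eq_of_markIdx_eq h (eq_of_dropEnds_hop_eq (u := M₁.forget.dirs)
    (getElem?_dirs_forget_markIdx M₁) (getElem?_dirs_forget_markIdx_succ M₁) ?_ ?_ ?_)
  · rw [h]; exact getElem?_dirs_forget_markIdx M₂
  · rw [h]; exact getElem?_dirs_forget_markIdx_succ M₂
  · rw [← red_forget_piM, hπ, red_forget_piM, h]

end MTree

lemma exists_marking_of_dirsAux (T : PTree) (b : Bool) {k : ℕ}
    (hk : (T.dirsAux b)[k]? = some true) (hk1 : (T.dirsAux b)[k + 1]? = some false) :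
    ∃ M : MTree, M.forget = T ∧ M.markIdx = k := by
  induction T generalizing b k with
  | leaf => simp [PTree.dirsAux] at hk1
  | node l r ihl ihr =>
    have hl := PTree.length_dirsAux l true
    simp only [PTree.dirsAux] at hk hk1
    rcases lt_trichotomy (k + 1) l.numLeaves with hlt | heq | hgt
    · rw [getElem?_append_left (by omega)] at hk hk1
      obtain ⟨M, rfl, rfl⟩ := ihl true hk hk1
      exact ⟨.nodeL M r, rfl, rfl⟩
    · cases l with
      | node l₁ l₂ =>
        obtain ⟨V, hV⟩ := PTree.exists_dirsAux_node_eq l₁ l₂ true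
        rw [hV] at hk hl
        simp [show k = V.length + 1 by simp at hl; omega] at hk
      | leaf =>
        obtain rfl : k = 0 := by simpa [PTree.numLeaves] using heq
        cases r with
        | leaf => exact ⟨.mark, rfl, rfl⟩
        | node r₁ r₂ =>
          obtain ⟨V, hV⟩ := PTree.exists_dirsAux_node_eq r₁ r₂ false
          rw [hV] at hk1
          simp [PTree.dirsAux] at hk1
    · rw [getElem?_append_right (by omega), hl] at hk hk1
      rw [show k + 1 - l.numLeaves = k - l.numLeaves + 1 by omega] at hk1
      obtain ⟨M, rfl, hM⟩ := ihr false hk hk1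
      exact ⟨.nodeR l M, rfl, by simp [MTree.markIdx, hM]; omega⟩

theorem flux_set_card_general (n : ℕ) (α β : ℝ) (C C' : List Bool) (hW : rate α β C' C ≠ 0) :
    Nat.card {M : MTree // M.forget.numLeaves = n + 2 ∧ M.forget.red = C' ∧
        (piM M).forget.red = C}
      = Nat.card {T : PTree // T.numLeaves = n + 2 ∧ T.red = C'} := by
  obtain ⟨k, hk, hk1, hkC⟩ := exists_hop_eq_of_rate_ne_zero hW
  refine Nat.card_eq_of_bijective (fun M => ⟨M.1.forget, M.2.1, M.2.2.1⟩) ⟨?_, ?_⟩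
  · intro M₁ M₂ h
    exact Subtype.ext (MTree.eq_of_forget_eq_of_red_piM_eq (congrArg Subtype.val h)
      (M₁.2.2.2.trans M₂.2.2.2.symm))
  · rintro ⟨T, hT, rfl⟩
    have hdirs := PTree.dirs_eq_cons_red (show 2 ≤ T.numLeaves by omega)
    have hne : T ≠ .leaf := by rintro rfl; simp [PTree.numLeaves] at hT
    rw [← hdirs, PTree.dirs_eq_dirsAux hne true] at hk hk1
    obtain ⟨M, rfl, rfl⟩ := exists_marking_of_dirsAux _ true hk hk1
    exact ⟨⟨M, hT, rfl, by rw [MTree.red_forget_piM, hdirs, hkC]⟩, rfl⟩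

/-- if `W(C' → C) ≠ 0` then
`|F(C' → C)| = |(R∘f)^{-1}{C'} ∩ (R∘f∘π)^{-1}{C}| = |R^{-1}{C'}|`. -/
theorem flux_set_card (n : ℕ) (α β : ℝ) (hα : α ∈ Set.Ioc (0:ℝ) 1)
    (hβ : β ∈ Set.Ioc (0:ℝ) 1) (C C' : List Bool) (hC : C.length = n)
    (hC' : C'.length = n) (hW : rate α β C' C ≠ 0) :
    Nat.card {M : MTree // M.forget.numLeaves = n + 2 ∧ M.forget.red = C' ∧
        (piM M).forget.red = C}
      = Nat.card {T : PTree // T.numLeaves = n + 2 ∧ T.red = C'} :=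
  flux_set_card_general n α β C C' hW
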